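/- Let F̄ : [0, ∞) → [0, 1] be nonincreasing with F̄(0) = 1 (the tail distribution of an almost surely positive random variable X). If F̄ is log-concave on [0, ∞), then for every integer n ≥ 1, ∫_0^∞ F̄(x) dx ≤ n · ∫_0^∞ F̄(x)^n dx; that is, E[X] ≤ n·E[X_{1:n}], so the computing cost E[X] of the (n,1) fork-early-cancel system is at most the cost n·E[X_{1:n}] of the (n,1) fork-join system. If F̄ is log-convex on [0, ∞), the inequality is reversed: n · ∫_0^∞ F̄(x)^n dx ≤ ∫_0^∞ F̄(x) dx for every integer n ≥ 1. -/

import Mathlib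

open MeasureTheory
open scoped ENNReal

/-- `f` is log-concave on `D`: `f(θx + (1−θ)y) ≥ f(x)^θ f(y)^{1−θ}`. -/
def LogConcaveOn (D : Set ℝ) (f : ℝ → ℝ) : Prop :=
  ∀ ⦃x⦄, x ∈ D → ∀ ⦃y⦄, y ∈ D → ∀ ⦃θ : ℝ⦄, θ ∈ Set.Icc (0 : ℝ) 1 →
    f x ^ θ * f y ^ (1 - θ) ≤ f (θ * x + (1 - θ) * y)

/-- `f` is log-convex on `D`: `f(θx + (1−θ)y) ≤ f(x)^θ f(y)^{1−θ}`. -/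
def LogConvexOn (D : Set ℝ) (f : ℝ → ℝ) : Prop :=
  ∀ ⦃x⦄, x ∈ D → ∀ ⦃y⦄, y ∈ D → ∀ ⦃θ : ℝ⦄, θ ∈ Set.Icc (0 : ℝ) 1 →
    f (θ * x + (1 - θ) * y) ≤ f x ^ θ * f y ^ (1 - θ)

/-! With `F̄(0) = 1`, log-concavity between the points `0` and `x` with weight `θ = 1/n` gives
`F̄(x)^{1/n} ≤ F̄(x/n)`, i.e. `F̄(x) ≤ F̄(x/n)^n`. Integrating over `(0, ∞)` and substituting
`x = n y` turns the right-hand side into `n ∫ F̄^n`. Log-convexity reverses every inequality. -/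

open Set

lemma setLIntegral_Ioi_comp_div {c : ℝ} (hc : 0 < c) (g : ℝ → ℝ≥0∞) :
    ∫⁻ x in Ioi 0, g (x / c) = ENNReal.ofReal c * ∫⁻ x in Ioi 0, g x := by
  have hscale : MeasurePreserving (· * c⁻¹) volume (ENNReal.ofReal c • volume) :=
    ⟨measurable_mul_const _, by rw [Real.map_volume_mul_right (inv_ne_zero hc.ne'), inv_inv,
      abs_of_pos hc]⟩
  have hemb : MeasurableEmbedding (· * c⁻¹) :=
    (Homeomorph.mulRight₀ _ (inv_ne_zero hc.ne')).measurableEmbedding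
  have hpre : (· * c⁻¹) ⁻¹' Ioi (0 : ℝ) = Ioi 0 := by
    rw [preimage_mul_const_Ioi₀ _ (inv_pos.2 hc), zero_div]
  simpa only [hpre, div_eq_mul_inv, Measure.restrict_smul, lintegral_smul_measure, smul_eq_mul]
    using hscale.setLIntegral_comp_preimage_emb hemb g (Ioi 0)

lemma LogConcaveOn.le_pow_comp_div {f : ℝ → ℝ} (hf : LogConcaveOn (Ici 0) f) (h0 : f 0 = 1)
    {n : ℕ} (hn : n ≠ 0) {x : ℝ} (hx : 0 ≤ x) (hfx : 0 ≤ f x) : f x ≤ f (x / n) ^ n := by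
  have h := hf hx self_mem_Ici ⟨by positivity, Nat.cast_inv_le_one n⟩
  simp only [h0, Real.one_rpow, mul_one, mul_zero, add_zero, inv_mul_eq_div] at h
  calc f x = (f x ^ (n⁻¹ : ℝ)) ^ n := (Real.rpow_inv_natCast_pow hfx hn).symm
    _ ≤ f (x / n) ^ n := pow_le_pow_left₀ (by positivity) h n

lemma LogConvexOn.pow_comp_div_le {f : ℝ → ℝ} (hf : LogConvexOn (Ici 0) f) (h0 : f 0 = 1)
    {n : ℕ} (hn : n ≠ 0) {x : ℝ} (hx : 0 ≤ x) (hfx : 0 ≤ f x) (hfxn : 0 ≤ f (x / n)) :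
    f (x / n) ^ n ≤ f x := by
  have h := hf hx self_mem_Ici ⟨by positivity, Nat.cast_inv_le_one n⟩
  simp only [h0, Real.one_rpow, mul_one, mul_zero, add_zero, inv_mul_eq_div] at h
  calc f (x / n) ^ n ≤ (f x ^ (n⁻¹ : ℝ)) ^ n := pow_le_pow_left₀ hfxn h n
    _ = f x := Real.rpow_inv_natCast_pow hfx hn

theorem early_cancel_cost_comparison_general (F : ℝ → ℝ)
    (hrange : ∀ x ≥ (0 : ℝ), F x ∈ Set.Icc (0 : ℝ) 1)
    (h0 : F 0 = 1) :
    (LogConcaveOn (Set.Ici 0) F →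
      ∀ n : ℕ, 1 ≤ n →
        ∫⁻ x in Set.Ioi (0 : ℝ), ENNReal.ofReal (F x)
          ≤ (n : ℝ≥0∞) * ∫⁻ x in Set.Ioi (0 : ℝ), ENNReal.ofReal (F x ^ n)) ∧
    (LogConvexOn (Set.Ici 0) F →
      ∀ n : ℕ, 1 ≤ n →
        (n : ℝ≥0∞) * ∫⁻ x in Set.Ioi (0 : ℝ), ENNReal.ofReal (F x ^ n)
          ≤ ∫⁻ x in Set.Ioi (0 : ℝ), ENNReal.ofReal (F x)) := by
  have hF_nonneg (x : ℝ) (hx : 0 ≤ x) : 0 ≤ F x := (hrange x hx).1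
  have hsubst (n : ℕ) (hn : 1 ≤ n) : ∫⁻ x in Ioi 0, ENNReal.ofReal (F (x / n) ^ n)
      = n * ∫⁻ x in Ioi 0, ENNReal.ofReal (F x ^ n) := by
    rw [setLIntegral_Ioi_comp_div (Nat.cast_pos.2 hn) fun y ↦ ENNReal.ofReal (F y ^ n),
      ENNReal.ofReal_natCast]
  refine ⟨fun hconc n hn ↦ ?_, fun hconv n hn ↦ ?_⟩
  · rw [← hsubst n hn]
    refine setLIntegral_mono' measurableSet_Ioi fun x hx ↦ ENNReal.ofReal_le_ofReal ?_
    exact hconc.le_pow_comp_div h0 (by omega) hx.le (hF_nonneg x hx.le)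
  · rw [← hsubst n hn]
    refine setLIntegral_mono' measurableSet_Ioi fun x hx ↦ ENNReal.ofReal_le_ofReal ?_
    exact hconv.pow_comp_div_le h0 (by omega) hx.le (hF_nonneg x hx.le)
      (hF_nonneg _ (div_nonneg hx.le n.cast_nonneg))

/-- For a tail distribution `F̄` (nonincreasing on `[0,∞)`, `F̄(0) = 1`):
log-concavity gives `E[X] = ∫_0^∞ F̄(x) dx ≤ n ∫_0^∞ F̄(x)^n dx = n E[X_{1:n}]`
(the cost of fork-early-cancel is at most that of fork-join), and log-convexity gives
the reverse inequality, for every `n ≥ 1`. -/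
theorem early_cancel_cost_comparison (F : ℝ → ℝ)
    (hrange : ∀ x ≥ (0 : ℝ), F x ∈ Set.Icc (0 : ℝ) 1)
    (hmono : AntitoneOn F (Set.Ici 0)) (h0 : F 0 = 1) :
    (LogConcaveOn (Set.Ici 0) F →
      ∀ n : ℕ, 1 ≤ n →
        ∫⁻ x in Set.Ioi (0 : ℝ), ENNReal.ofReal (F x)
          ≤ (n : ℝ≥0∞) * ∫⁻ x in Set.Ioi (0 : ℝ), ENNReal.ofReal (F x ^ n)) ∧
    (LogConvexOn (Set.Ici 0) F →
      ∀ n : ℕ, 1 ≤ n →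
        (n : ℝ≥0∞) * ∫⁻ x in Set.Ioi (0 : ℝ), ENNReal.ofReal (F x ^ n)
          ≤ ∫⁻ x in Set.Ioi (0 : ℝ), ENNReal.ofReal (F x)) :=
  early_cancel_cost_comparison_general F hrange h0
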